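/- Let H be a complex Hilbert space and let γ : H → H be a bounded linear operator satisfying γ∘γ = −I and γ* = −γ (so γ is unitary). Then there exists a closed subspace L ⊆ H with γ(L) = L^⊥ (the orthogonal complement of L) if and only if the eigenspaces ker(γ − i·I) and ker(γ + i·I) are isometrically isomorphic as Hilbert spaces. -/

import Mathlib

/-!
The eigenspaces `E₊ = ker (γ - i)` and `E₋ = ker (γ + i)` are orthogonal (γ is skew-adjoint) and
span `H` (as `γ² = -1`, `w = ½ (w - iγw) + ½ (w + iγw)`).

If `γ L = Lᗮ`, then `γ` also maps `Lᗮ` into `L`, so the reflection in `L` anticommutes with `γ`;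
being an isometry, it maps `E₊` onto `E₋`.

Conversely, an isometry `e : E₊ ≃ E₋` has graph `L = {u + e u}` with `Lᗮ = {u - e u}`, and
`γ (u + e u) = i u - e (i u)`, so `γ L = Lᗮ`; `L` is closed as the preimage of `Lᗮ` under `γ`.
-/

namespace Submodule

variable {𝕜 E : Type*} [RCLike 𝕜] [NormedAddCommGroup E] [InnerProductSpace 𝕜 E]

section Graph

variable {A B : Submodule 𝕜 E}

def internalGraph (f : A →ₗ[𝕜] B) : Submodule 𝕜 E :=
  LinearMap.range (A.subtype + B.subtype ∘ₗ f)

theorem mem_internalGraph {f : A →ₗ[𝕜] B} {z : E} :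
    z ∈ internalGraph f ↔ ∃ u : A, (u : E) + f u = z :=
  Iff.rfl

theorem internalGraph_orthogonal (hAB : A ⟂ B) (hsup : A ⊔ B = ⊤) (e : A ≃ₗᵢ[𝕜] B) :
    (internalGraph (e : A →ₗ[𝕜] B))ᗮ = internalGraph (-(e : A →ₗ[𝕜] B)) := by
  have he (u v : A) : inner 𝕜 (e u : E) (e v : E) = inner 𝕜 (u : E) v := e.inner_map_map u v
  apply le_antisymm
  · intro w hw
    obtain ⟨a, ha, b, hb, rfl⟩ := mem_sup.mp (hsup ▸ mem_top : w ∈ A ⊔ B)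
    set a' : A := ⟨a, ha⟩
    set b' : A := e.symm ⟨b, hb⟩
    have hb' : b = (e b' : E) := by simp [b']
    have hab' (u : A) : inner 𝕜 (u : E) (a' + b' : A) = 0 := by
      have h := (mem_orthogonal _ _).mp hw _ (mem_internalGraph.mpr ⟨u, rfl⟩)
      simp only [LinearEquiv.coe_coe, ContinuousLinearEquiv.coe_toLinearEquiv,
        LinearIsometryEquiv.coe_toContinuousLinearEquiv] at h
      rw [inner_add_left, inner_add_right, inner_add_right, hb', he,
        hAB.inner_eq u.2 (e b').2, hAB.symm.inner_eq (e u).2 ha] at h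
      simpa [a', inner_add_right] using h
    have hba : b' = -a' :=
      eq_neg_of_add_eq_zero_right (coe_eq_zero.mp (inner_self_eq_zero.mp (hab' _)))
    exact mem_internalGraph.mpr ⟨a', by simp [hb', hba, a']⟩
  · rintro _ ⟨v, rfl⟩
    rw [mem_orthogonal]
    rintro _ ⟨u, rfl⟩
    simp [inner_add_left, inner_add_right, he, hAB.inner_eq u.2 (e v).2,
      hAB.symm.inner_eq (e u).2 v.2]

end Graph

theorem isClosed_of_map_eq_orthogonal [CompleteSpace E] {L : Submodule 𝕜 E} {T : E →L[𝕜] E}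
    (hT : Function.Injective T) (hL : L.map (T : E →ₗ[𝕜] E) = Lᗮ) : IsClosed (L : Set E) := by
  rw [← L.comap_map_eq_of_injective (f := (T : E →ₗ[𝕜] E)) hT, hL]
  exact L.isClosed_orthogonal.preimage T.continuous

theorem reflection_apply_eq_neg_of_mapsTo (K : Submodule 𝕜 E) [K.HasOrthogonalProjection]
    {T : E →ₗ[𝕜] E} (hK : Set.MapsTo T K Kᗮ) (hK' : Set.MapsTo T Kᗮ K) (x : E) :
    K.reflection (T x) = -T (K.reflection x) := by
  rw [← K.starProjection_add_starProjection_orthogonal x]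
  have hp : K.starProjection x ∈ K := K.starProjection_apply_mem x
  have hq : Kᗮ.starProjection x ∈ Kᗮ := Kᗮ.starProjection_apply_mem x
  simp only [map_add, reflection_mem_subspace_eq_self hp,
    reflection_mem_subspace_orthogonalComplement_eq_neg hq,
    reflection_mem_subspace_eq_self (hK' hq),
    reflection_mem_subspace_orthogonalComplement_eq_neg (hK hp), map_neg]
  abel

end Submodule

namespace Module.End

theorem map_eigenspace_of_anticommute {R M : Type*} [CommRing R] [AddCommGroup M] [Module R M]
    (e : M ≃ₗ[R] M) {T : End R M} (he : ∀ x, e (T x) = -T (e x)) (c : R) :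
    (eigenspace T c).map (e : M →ₗ[R] M) = eigenspace T (-c) := by
  apply le_antisymm
  · rintro _ ⟨x, hx, rfl⟩
    rw [SetLike.mem_coe, mem_eigenspace_iff] at hx
    rw [mem_eigenspace_iff]
    simp [← neg_eq_iff_eq_neg.mpr (he x), hx]
  · intro y hy
    refine ⟨e.symm y, ?_, e.apply_symm_apply y⟩
    rw [mem_eigenspace_iff] at hy
    rw [SetLike.mem_coe, mem_eigenspace_iff]
    apply e.injective
    rw [he, e.apply_symm_apply, hy, map_smul, e.apply_symm_apply, neg_smul, neg_neg]

section

variable {𝕜 E : Type*} [NormedField 𝕜] [NormedAddCommGroup E] [NormedSpace 𝕜 E]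

theorem ker_sub_smul_one_eq_eigenspace (T : E →L[𝕜] E) (c : 𝕜) :
    LinearMap.ker ((T - c • (1 : E →L[𝕜] E) : E →L[𝕜] E) : E →ₗ[𝕜] E) =
      eigenspace (T : E →ₗ[𝕜] E) c := by
  ext x
  simp [sub_eq_zero]

theorem ker_add_smul_one_eq_eigenspace (T : E →L[𝕜] E) (c : 𝕜) :
    LinearMap.ker ((T + c • (1 : E →L[𝕜] E) : E →L[𝕜] E) : E →ₗ[𝕜] E) =
      eigenspace (T : E →ₗ[𝕜] E) (-c) := by
  ext x
  simp [add_eq_zero_iff_eq_neg]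

end

theorem nonempty_eigenspace_equiv_of_map_eq_orthogonal {𝕜 E : Type*} [RCLike 𝕜]
    [NormedAddCommGroup E] [InnerProductSpace 𝕜 E] [CompleteSpace E] {T : E →ₗ[𝕜] E}
    (hsq : ∀ x, T (T x) = -x) {L : Submodule 𝕜 E} (hLc : IsClosed (L : Set E))
    (hL : L.map T = Lᗮ) (c : 𝕜) :
    Nonempty (eigenspace T c ≃ₗᵢ[𝕜] eigenspace T (-c)) := by
  have : CompleteSpace L := hLc.completeSpace_coe
  have hmaps : Set.MapsTo T L Lᗮ := fun x hx => hL ▸ Submodule.mem_map_of_mem hx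
  have hmaps' : Set.MapsTo T Lᗮ L := by
    intro _ hx
    obtain ⟨y, hy, rfl⟩ := hL ▸ hx
    simpa [hsq] using L.neg_mem hy
  have hmap := map_eigenspace_of_anticommute L.reflection.toLinearEquiv
    (L.reflection_apply_eq_neg_of_mapsTo hmaps hmaps') c
  exact ⟨(L.reflection.submoduleMap _).trans (.ofEq _ _ hmap)⟩

end Module.End

open Module.End Submodule Complex

section ComplexStructure

variable {H : Type*} [NormedAddCommGroup H] [InnerProductSpace ℂ H]

theorem isOrtho_eigenspace_I_eigenspace_neg_I {γ : H →ₗ[ℂ] H}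
    (hskew : ∀ x y, inner ℂ (γ x) y = -inner ℂ x (γ y)) :
    eigenspace γ I ⟂ eigenspace γ (-I) := by
  rw [isOrtho_iff_inner_eq]
  intro u hu v hv
  have h := hskew u v
  rw [mem_eigenspace_iff.mp hu, mem_eigenspace_iff.mp hv, inner_smul_left, inner_smul_right,
    conj_I] at h
  have h2 : (2 * I) * inner ℂ u v = 0 := by linear_combination -h
  simpa [I_ne_zero] using h2

theorem eigenspace_I_sup_eigenspace_neg_I {γ : H →ₗ[ℂ] H} (hsq : ∀ x, γ (γ x) = -x) :
    eigenspace γ I ⊔ eigenspace γ (-I) = ⊤ := by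
  refine eq_top_iff'.mpr fun w => mem_sup.mpr ?_
  have hI : w - I • γ w ∈ eigenspace γ I := by
    rw [mem_eigenspace_iff]
    simp only [map_sub, map_smul, hsq, smul_sub, smul_smul, I_mul_I]
    module
  have hnegI : w + I • γ w ∈ eigenspace γ (-I) := by
    rw [mem_eigenspace_iff]
    simp only [map_add, map_smul, hsq, smul_add, smul_smul, neg_mul, I_mul_I]
    module
  exact ⟨_, smul_mem _ (2⁻¹ : ℂ) hI, _, smul_mem _ (2⁻¹ : ℂ) hnegI, by module⟩

theorem map_internalGraph_eigenspace {γ : H →ₗ[ℂ] H} (f : eigenspace γ I →ₗ[ℂ] eigenspace γ (-I)) :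
    (internalGraph f).map γ = internalGraph (-f) := by
  apply le_antisymm
  · rintro _ ⟨_, ⟨u, rfl⟩, rfl⟩
    refine ⟨I • u, ?_⟩
    simp [mem_eigenspace_iff.mp u.2, mem_eigenspace_iff.mp (f u).2]
  · rintro _ ⟨u, rfl⟩
    refine ⟨_, ⟨-I • u, rfl⟩, ?_⟩
    simp [mem_eigenspace_iff.mp u.2, mem_eigenspace_iff.mp (f _).2, smul_smul]

theorem exists_map_eq_orthogonal_of_eigenspace_equiv [CompleteSpace H] (γ : H →L[ℂ] H)
    (hsq : ∀ x, γ (γ x) = -x) (hskew : ∀ x y, inner ℂ (γ x) y = -inner ℂ x (γ y))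
    (e : eigenspace (γ : H →ₗ[ℂ] H) I ≃ₗᵢ[ℂ] eigenspace (γ : H →ₗ[ℂ] H) (-I)) :
    ∃ L : Submodule ℂ H, IsClosed (L : Set H) ∧ L.map (γ : H →ₗ[ℂ] H) = Lᗮ := by
  set L := internalGraph (e : eigenspace (γ : H →ₗ[ℂ] H) I →ₗ[ℂ] eigenspace (γ : H →ₗ[ℂ] H) (-I))
  have hL : L.map (γ : H →ₗ[ℂ] H) = Lᗮ := by
    rw [map_internalGraph_eigenspace, internalGraph_orthogonal
      (isOrtho_eigenspace_I_eigenspace_neg_I hskew) (eigenspace_I_sup_eigenspace_neg_I hsq)]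
  have hγ : Function.Injective γ := fun x y hxy =>
    neg_injective (by simpa [hsq] using congr(γ $hxy))
  exact ⟨L, isClosed_of_map_eq_orthogonal hγ hL, hL⟩

end ComplexStructure

theorem statement0 {H : Type*} [NormedAddCommGroup H] [InnerProductSpace ℂ H]
    [CompleteSpace H] (γ : H →L[ℂ] H)
    (hsq : γ ∘L γ = -1)
    (hadj : ContinuousLinearMap.adjoint γ = -γ) :
    (∃ L : Submodule ℂ H, IsClosed (L : Set H) ∧ L.map (γ : H →ₗ[ℂ] H) = Lᗮ) ↔
      Nonempty
        ((LinearMap.ker ((γ - Complex.I • (1 : H →L[ℂ] H) : H →L[ℂ] H) : H →ₗ[ℂ] H)) ≃ₗᵢ[ℂ]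
          (LinearMap.ker ((γ + Complex.I • (1 : H →L[ℂ] H) : H →L[ℂ] H) : H →ₗ[ℂ] H))) := by
  have hsq' (x : H) : γ (γ x) = -x := by simpa using congr($hsq x)
  have hskew (x y : H) : inner ℂ (γ x) y = -inner ℂ x (γ y) := by
    rw [← ContinuousLinearMap.adjoint_inner_right, hadj]
    simp
  rw [ker_sub_smul_one_eq_eigenspace, ker_add_smul_one_eq_eigenspace]
  constructor
  · rintro ⟨L, hLc, hL⟩
    exact nonempty_eigenspace_equiv_of_map_eq_orthogonal hsq' hLc hL I
  · rintro ⟨e⟩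
    exact exists_map_eq_orthogonal_of_eigenspace_equiv γ hsq' hskew e
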